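/- Let G be a transient network, ρ a vertex, and A a set of vertices. Then the probability that the random walk started at ρ ever hits A satisfies P_ρ(hit A) ≤ C^F_eff(ρ ↔ A; G) / C_eff(ρ → ∞; G), where C^F_eff is the free effective conductance and C_eff(ρ → ∞; G) is the effective conductance from ρ to infinity. -/

import Mathlib

open ENNReal
open scoped Classical

/-- The Dirichlet energy of a function on a network. -/
noncomputable def dirichletEnergy {V : Type*} (G : SimpleGraph V) (c : V → V → ℝ)
    (f : V → ℝ) : ℝ≥0∞ :=
  (1 / 2) * ∑' p : V × V,
    if G.Adj p.1 p.2 then ENNReal.ofReal (c p.1 p.2 * (f p.1 - f p.2) ^ 2) else 0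

/-- The free effective conductance between vertex sets `A` and `B`. -/
noncomputable def freeEffCond {V : Type*} (G : SimpleGraph V) (c : V → V → ℝ)
    (A B : Set V) : ℝ≥0∞ :=
  ⨅ (F : V → ℝ) (_ : ∀ a ∈ A, F a = 1) (_ : ∀ b ∈ B, F b = 0), dirichletEnergy G c F

/-- The effective conductance from `ρ` to infinity, as the infimum over finite sets `W`
of the free effective conductance from `ρ` to the complement of `W`. -/
noncomputable def effCondToInfinity {V : Type*} (G : SimpleGraph V) (c : V → V → ℝ)
    (ρ : V) : ℝ≥0∞ :=
  ⨅ W : Finset V, freeEffCond G c {ρ} {v | v ∉ W}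

/-- One-step transition probabilities of the random walk on the network `(G, c)`. -/
noncomputable def walkStep {V : Type*} (G : SimpleGraph V)
    [∀ v, Fintype (G.neighborSet v)] (c : V → V → ℝ) (u v : V) : ℝ :=
  if G.Adj u v then c u v / ∑ w ∈ G.neighborFinset u, c u w else 0

/-- `netHitBy G c A n u`: probability that the network random walk started at `u` visits
`A` within `n` steps; its supremum over `n` is `P_u(hit A)`. -/
noncomputable def netHitBy {V : Type*} (G : SimpleGraph V)
    [∀ v, Fintype (G.neighborSet v)] (c : V → V → ℝ) (A : Set V) : ℕ → V → ℝ
  | 0, u => if u ∈ A then 1 else 0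
  | n + 1, u => if u ∈ A then 1
      else ∑ w ∈ G.neighborFinset u, walkStep G c u w * netHitBy G c A n w

/-!
Fix `n` and let `W` be the ball of radius `n` about `ρ`: up to time `n` the walk only uses
edges meeting `W`. On this finite network let `w` be the unit voltage from `ρ` to `A` and `f`
the unit voltage from `ρ` to the complement of `W`, both obtained as energy minimisers. Then
`Ψ = 1 - w + (E(w) / E(f)) f` is nonnegative, at least `1` on `A`, and harmonic on `W \ A`:
away from `ρ` because `w` and `f` are, and at `ρ` by the choice of the coefficient. Comparing
the walk with `Ψ` gives `P_ρ(hit A by time n) ≤ Ψ ρ = E(w) / E(f)`. Finally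
`E(f) ≥ C_eff(ρ → ∞)` since `f` vanishes off the finite set `W`, and `E(w) ≤ E(g)` for
every `g` equal to `1` at `ρ` and `0` on `A` by the Dirichlet principle.
-/

open Finset

section FiniteNetwork

variable {V : Type*} (a : V → V → ℝ) (S : Finset V)

noncomputable def netFlow (F : V → ℝ) (x : V) : ℝ :=
  ∑ y ∈ S, a x y * (F x - F y)

noncomputable def finEnergy (F : V → ℝ) : ℝ :=
  1 / 2 * ∑ x ∈ S, ∑ y ∈ S, a x y * (F x - F y) ^ 2

variable {a S}

lemma finEnergy_nonneg (ha : ∀ x y, 0 ≤ a x y) (F : V → ℝ) : 0 ≤ finEnergy a S F := by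
  unfold finEnergy
  have := sum_nonneg fun x (_ : x ∈ S) => sum_nonneg fun y (_ : y ∈ S) =>
    mul_nonneg (ha x y) (sq_nonneg (F x - F y))
  positivity

lemma continuous_finEnergy : Continuous (finEnergy a S) := by
  unfold finEnergy
  fun_prop

lemma finEnergy_comp_le (ha : ∀ x y, 0 ≤ a x y) {φ : ℝ → ℝ} (hφ : LipschitzWith 1 φ)
    (F : V → ℝ) : finEnergy a S (φ ∘ F) ≤ finEnergy a S F := by
  unfold finEnergy
  refine mul_le_mul_of_nonneg_left
    (sum_le_sum fun x _ => sum_le_sum fun y _ => ?_) (by norm_num)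
  refine mul_le_mul_of_nonneg_left ?_ (ha x y)
  simpa [sq_le_sq, Real.dist_eq] using hφ.dist_le_mul (F x) (F y)

lemma sum_sum_mul_sub_mul_sub (hsymm : ∀ x y, a x y = a y x) (F G : V → ℝ) :
    ∑ x ∈ S, ∑ y ∈ S, a x y * ((F x - F y) * (G x - G y))
      = 2 * ∑ x ∈ S, G x * netFlow a S F x := by
  have hswap : ∑ x ∈ S, ∑ y ∈ S, a x y * (F x - F y) * G y
      = -∑ x ∈ S, ∑ y ∈ S, a x y * (F x - F y) * G x := by
    rw [sum_comm, ← sum_neg_distrib]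
    refine sum_congr rfl fun x _ => ?_
    rw [← sum_neg_distrib]
    refine sum_congr rfl fun y _ => ?_
    rw [hsymm]
    ring
  have hexp : ∀ x y, a x y * ((F x - F y) * (G x - G y))
      = a x y * (F x - F y) * G x - a x y * (F x - F y) * G y := fun x y => by ring
  simp only [hexp, sum_sub_distrib, hswap, netFlow, mul_sum]
  rw [sub_neg_eq_add, ← two_mul, mul_sum]
  refine sum_congr rfl fun x _ => ?_
  rw [mul_sum]
  refine sum_congr rfl fun y _ => ?_
  ring

lemma finEnergy_eq_sum_mul_netFlow (hsymm : ∀ x y, a x y = a y x) (F : V → ℝ) :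
    finEnergy a S F = ∑ x ∈ S, F x * netFlow a S F x := by
  have h := sum_sum_mul_sub_mul_sub (S := S) hsymm F F
  simp only [← sq] at h
  rw [finEnergy, h]
  ring

lemma netFlow_eq_sub (F : V → ℝ) (u : V) :
    netFlow a S F u = (∑ y ∈ S, a u y) * F u - ∑ y ∈ S, a u y * F y := by
  simp only [netFlow, mul_sub, sum_sub_distrib, sum_mul]

lemma finEnergy_update [DecidableEq V] (hsymm : ∀ x y, a x y = a y x) {u : V} (hu : u ∈ S)
    (hdiag : a u u = 0) (F : V → ℝ) (t : ℝ) :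
    finEnergy a S (Function.update F u t) = finEnergy a S F
      + 2 * (t - F u) * netFlow a S F u + (t - F u) ^ 2 * ∑ y ∈ S, a u y := by
  set s := t - F u
  set δ : V → ℝ := Pi.single u 1
  have hupdate : ∀ x, Function.update F u t x = F x + s * δ x := by
    intro x
    rcases eq_or_ne x u with rfl | hx
    · simp [δ, s]
    · simp [δ, hx]
  have hexp : ∀ x y, a x y * (Function.update F u t x - Function.update F u t y) ^ 2
      = a x y * (F x - F y) ^ 2 + 2 * s * (a x y * ((F x - F y) * (δ x - δ y)))
        + s ^ 2 * (a x y * ((δ x - δ y) * (δ x - δ y))) := fun x y => by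
    rw [hupdate, hupdate]; ring
  have hδ : ∀ g : V → ℝ, ∑ x ∈ S, δ x * g x = g u := fun g => by
    simp [δ, Pi.single_apply, hu]
  have hflow : netFlow a S δ u = ∑ y ∈ S, a u y := by
    simp only [netFlow_eq_sub, mul_comm (a u _), hδ (a u)]
    simp [δ, hdiag]
  simp only [finEnergy, hexp, sum_add_distrib, ← mul_sum, sum_sum_mul_sub_mul_sub hsymm, hδ,
    hflow]
  ring

/-- `F u - netFlow a S F u / ∑ y ∈ S, a u y` is the `a u`-weighted mean of `F`. -/
lemma netFlow_eq_zero_of_isMinOn [DecidableEq V] (hsymm : ∀ x y, a x y = a y x)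
    (ha : ∀ x y, 0 ≤ a x y) {u : V} (hu : u ∈ S) (hdiag : a u u = 0) {K : Set (V → ℝ)}
    {F : V → ℝ} (hmin : IsMinOn (finEnergy a S) K F)
    (hK : Function.update F u (F u - netFlow a S F u / ∑ y ∈ S, a u y) ∈ K) :
    netFlow a S F u = 0 := by
  set D := ∑ y ∈ S, a u y
  set N := netFlow a S F u
  obtain hD | hD : D = 0 ∨ 0 < D := (sum_nonneg fun y _ => ha u y).eq_or_lt'
  · have hzero : ∀ y ∈ S, a u y = 0 := (sum_eq_zero_iff_of_nonneg fun y _ => ha u y).1 hD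
    exact sum_eq_zero fun y hy => by rw [hzero y hy, zero_mul]
  · have h := hmin hK
    have hdrop : 2 * (F u - N / D - F u) * N + (F u - N / D - F u) ^ 2 * D = -(N ^ 2 / D) := by
      field_simp; ring
    rw [Set.mem_ofPred_eq, finEnergy_update hsymm hu hdiag, add_assoc, hdrop] at h
    have hN : N ^ 2 ≤ 0 := by
      have : N ^ 2 / D ≤ 0 := by linarith
      rwa [div_le_iff₀ hD, zero_mul] at this
    exact pow_eq_zero_iff two_ne_zero |>.1 (le_antisymm hN (sq_nonneg N))

lemma sub_netFlow_div_mem_Icc (ha : ∀ x y, 0 ≤ a x y) {F : V → ℝ}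
    (hF : ∀ x, F x ∈ Set.Icc (0 : ℝ) 1) (u : V) :
    F u - netFlow a S F u / ∑ y ∈ S, a u y ∈ Set.Icc (0 : ℝ) 1 := by
  set D := ∑ y ∈ S, a u y
  obtain hD | hD : D = 0 ∨ 0 < D := (sum_nonneg fun y _ => ha u y).eq_or_lt'
  · simpa [hD] using hF u
  · have hmean : F u - netFlow a S F u / D = (∑ y ∈ S, a u y * F y) / D := by
      rw [netFlow_eq_sub]; field_simp; ring
    rw [hmean]
    exact ⟨div_nonneg (sum_nonneg fun y _ => mul_nonneg (ha u y) (hF y).1) hD.le,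
      div_le_one_of_le₀ (sum_le_sum fun y _ => mul_le_of_le_one_right (ha u y) (hF y).2) hD.le⟩

def voltageBox (ρ : V) (B : Set V) : Set (V → ℝ) :=
  Set.univ.pi fun x => if x = ρ then {1} else if x ∈ B then {0} else Set.Icc 0 1

lemma exists_isMinOn_voltageBox (a : V → V → ℝ) (S : Finset V) (ρ : V) (B : Set V) :
    ∃ F ∈ voltageBox ρ B, IsMinOn (finEnergy a S) (voltageBox ρ B) F := by
  refine IsCompact.exists_isMinOn (isCompact_univ_pi fun x => ?_) ?_
    continuous_finEnergy.continuousOn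
  · split_ifs
    exacts [isCompact_singleton, isCompact_singleton, isCompact_Icc]
  · refine Set.univ_pi_nonempty_iff.2 fun x => ?_
    split_ifs
    exacts [Set.singleton_nonempty _, Set.singleton_nonempty _, Set.nonempty_Icc.2 zero_le_one]

noncomputable def voltage (a : V → V → ℝ) (S : Finset V) (ρ : V) (B : Set V) : V → ℝ :=
  (exists_isMinOn_voltageBox a S ρ B).choose

variable {ρ : V} {A B : Set V}

lemma voltage_mem_voltageBox : voltage a S ρ B ∈ voltageBox ρ B :=
  (exists_isMinOn_voltageBox a S ρ B).choose_spec.1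

lemma isMinOn_voltage : IsMinOn (finEnergy a S) (voltageBox ρ B) (voltage a S ρ B) :=
  (exists_isMinOn_voltageBox a S ρ B).choose_spec.2

lemma voltage_apply_mem (x : V) :
    voltage a S ρ B x
      ∈ if x = ρ then {1} else if x ∈ B then ({0} : Set ℝ) else Set.Icc 0 1 :=
  Set.mem_univ_pi.1 voltage_mem_voltageBox x

lemma voltage_apply_self : voltage a S ρ B ρ = 1 := by
  simpa using voltage_apply_mem (a := a) (S := S) (ρ := ρ) (B := B) ρ

lemma voltage_eq_zero {x : V} (hx : x ∈ B) (hxρ : x ≠ ρ) : voltage a S ρ B x = 0 := by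
  simpa [hx, hxρ] using voltage_apply_mem (a := a) (S := S) (ρ := ρ) (B := B) x

lemma voltage_mem_Icc (x : V) : voltage a S ρ B x ∈ Set.Icc (0 : ℝ) 1 := by
  have h := voltage_apply_mem (a := a) (S := S) (ρ := ρ) (B := B) x
  split_ifs at h <;> simp_all

lemma netFlow_voltage (hsymm : ∀ x y, a x y = a y x) (ha : ∀ x y, 0 ≤ a x y) {u : V}
    (hu : u ∈ S) (hdiag : a u u = 0) (huρ : u ≠ ρ) (huB : u ∉ B) :
    netFlow a S (voltage a S ρ B) u = 0 := by
  refine netFlow_eq_zero_of_isMinOn hsymm ha hu hdiag isMinOn_voltage ?_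
  refine (Set.update_mem_pi_iff_of_mem voltage_mem_voltageBox).2 fun _ => ?_
  simpa [huρ, huB] using sub_netFlow_div_mem_Icc ha voltage_mem_Icc u

lemma finEnergy_voltage (hsymm : ∀ x y, a x y = a y x) (ha : ∀ x y, 0 ≤ a x y)
    (hdiag : ∀ x, a x x = 0) (hρ : ρ ∈ S) :
    finEnergy a S (voltage a S ρ B) = netFlow a S (voltage a S ρ B) ρ := by
  rw [finEnergy_eq_sum_mul_netFlow hsymm, sum_eq_single_of_mem ρ hρ, voltage_apply_self, one_mul]
  intro x hx hxρ
  by_cases hxB : x ∈ B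
  · rw [voltage_eq_zero hxB hxρ, zero_mul]
  · rw [netFlow_voltage hsymm ha hx (hdiag x) hxρ hxB, mul_zero]

lemma finEnergy_voltage_le (ha : ∀ x y, 0 ≤ a x y) {F : V → ℝ} (hFρ : F ρ = 1)
    (hFB : ∀ x ∈ B, F x = 0) : finEnergy a S (voltage a S ρ B) ≤ finEnergy a S F := by
  -- truncating `F` to `[0, 1]` does not increase its energy
  set φ : ℝ → ℝ := Subtype.val ∘ Set.projIcc 0 1 zero_le_one
  have hφ : LipschitzWith 1 φ := by
    simpa using (LipschitzWith.subtype_val _).comp (LipschitzWith.projIcc zero_le_one)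
  have hbox : φ ∘ F ∈ voltageBox ρ B := by
    intro x _
    by_cases hxρ : x = ρ
    · simp [hxρ, hFρ, φ]
    by_cases hxB : x ∈ B
    · simp [hxρ, hxB, hFB x hxB, φ]
    · simp [hxρ, hxB, φ]
  exact (isMinOn_voltage hbox).trans (finEnergy_comp_le ha hφ F)

noncomputable def hittingMajorant (a : V → V → ℝ) (S : Finset V) (ρ : V) (A B : Set V) :
    V → ℝ := fun x =>
  1 - voltage a S ρ A x
    + finEnergy a S (voltage a S ρ A) / finEnergy a S (voltage a S ρ B) * voltage a S ρ B x

lemma hittingMajorant_apply_self :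
    hittingMajorant a S ρ A B ρ
      = finEnergy a S (voltage a S ρ A) / finEnergy a S (voltage a S ρ B) := by
  simp [hittingMajorant, voltage_apply_self]

lemma hittingMajorant_nonneg (ha : ∀ x y, 0 ≤ a x y) (x : V) :
    0 ≤ hittingMajorant a S ρ A B x := by
  have hM := div_nonneg (finEnergy_nonneg (S := S) ha (voltage a S ρ A))
    (finEnergy_nonneg (S := S) ha (voltage a S ρ B))
  have hw := voltage_mem_Icc (a := a) (S := S) (ρ := ρ) (B := A) x
  have hf := voltage_mem_Icc (a := a) (S := S) (ρ := ρ) (B := B) x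
  unfold hittingMajorant
  nlinarith [hw.2, hf.1]

lemma one_le_hittingMajorant (ha : ∀ x y, 0 ≤ a x y) {x : V} (hx : x ∈ A) (hxρ : x ≠ ρ) :
    1 ≤ hittingMajorant a S ρ A B x := by
  have hM := div_nonneg (finEnergy_nonneg (S := S) ha (voltage a S ρ A))
    (finEnergy_nonneg (S := S) ha (voltage a S ρ B))
  have hf := voltage_mem_Icc (a := a) (S := S) (ρ := ρ) (B := B) x
  simp only [hittingMajorant, voltage_eq_zero hx hxρ, sub_zero]
  nlinarith [hf.1]

lemma netFlow_hittingMajorant (hsymm : ∀ x y, a x y = a y x) (ha : ∀ x y, 0 ≤ a x y)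
    (hdiag : ∀ x, a x x = 0) (hρ : ρ ∈ S) (hB : finEnergy a S (voltage a S ρ B) ≠ 0)
    {u : V} (hu : u ∈ S) (huA : u ∉ A) (huB : u ∉ B) :
    netFlow a S (hittingMajorant a S ρ A B) u = 0 := by
  set w := voltage a S ρ A
  set f := voltage a S ρ B
  have hlin : netFlow a S (hittingMajorant a S ρ A B) u
      = finEnergy a S w / finEnergy a S f * netFlow a S f u - netFlow a S w u := by
    simp only [netFlow, hittingMajorant, mul_sum, ← sum_sub_distrib]
    exact sum_congr rfl fun y _ => by ring
  rw [hlin]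
  rcases eq_or_ne u ρ with rfl | huρ
  · -- out of `ρ`, the flow of `w` is `E(w)` and that of `f` is `E(f)`
    rw [← finEnergy_voltage hsymm ha hdiag hρ, ← finEnergy_voltage hsymm ha hdiag hρ,
      div_mul_cancel₀ _ hB, sub_self]
  · rw [netFlow_voltage hsymm ha hu (hdiag u) huρ huA,
      netFlow_voltage hsymm ha hu (hdiag u) huρ huB, mul_zero, sub_zero]

lemma ofReal_finEnergy (ha : ∀ x y, 0 ≤ a x y) (F : V → ℝ) :
    ENNReal.ofReal (finEnergy a S F)
      = 1 / 2 * ∑ p ∈ S ×ˢ S, ENNReal.ofReal (a p.1 p.2 * (F p.1 - F p.2) ^ 2) := by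
  have hterm : ∀ p : V × V, 0 ≤ a p.1 p.2 * (F p.1 - F p.2) ^ 2 := fun p =>
    mul_nonneg (ha p.1 p.2) (sq_nonneg _)
  rw [finEnergy, ← sum_product', ENNReal.ofReal_mul (by norm_num),
    ENNReal.ofReal_sum_of_nonneg fun p _ => hterm p, ENNReal.ofReal_div_of_pos two_pos]
  simp

end FiniteNetwork

section Network

variable {V : Type*} {G : SimpleGraph V} {c : V → V → ℝ}

variable (G c) in
noncomputable def restrictCond (W : Finset V) (x y : V) : ℝ :=
  if G.Adj x y ∧ (x ∈ W ∨ y ∈ W) then c x y else 0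

lemma restrictCond_nonneg (hcpos : ∀ u v, G.Adj u v → 0 < c u v) (W : Finset V) (x y : V) :
    0 ≤ restrictCond G c W x y := by
  unfold restrictCond
  split_ifs with h
  exacts [(hcpos x y h.1).le, le_rfl]

lemma restrictCond_symm (hcsymm : ∀ u v, c u v = c v u) (W : Finset V) (x y : V) :
    restrictCond G c W x y = restrictCond G c W y x := by
  simp only [restrictCond, G.adj_comm x y, or_comm (a := x ∈ W), hcsymm x y]

lemma restrictCond_self (W : Finset V) (x : V) : restrictCond G c W x x = 0 := by
  simp [restrictCond]

lemma ofReal_finEnergy_le_dirichletEnergy (hcpos : ∀ u v, G.Adj u v → 0 < c u v)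
    (W S : Finset V) (F : V → ℝ) :
    ENNReal.ofReal (finEnergy (restrictCond G c W) S F) ≤ dirichletEnergy G c F := by
  rw [ofReal_finEnergy (restrictCond_nonneg hcpos W), dirichletEnergy]
  gcongr
  refine (sum_le_sum fun p _ => ?_).trans (ENNReal.sum_le_tsum _)
  unfold restrictCond
  split_ifs <;> simp_all

variable [∀ v, Fintype (G.neighborSet v)]

variable (G) in
noncomputable def closedNbhd (W : Finset V) : Finset V :=
  W ∪ W.biUnion fun v => G.neighborFinset v

lemma subset_closedNbhd (W : Finset V) : W ⊆ closedNbhd G W := subset_union_left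

lemma mem_closedNbhd_of_adj {W : Finset V} {x y : V} (hx : x ∈ W) (hxy : G.Adj x y) :
    y ∈ closedNbhd G W :=
  mem_union_right _ (mem_biUnion.2 ⟨x, hx, (G.mem_neighborFinset x y).2 hxy⟩)

lemma mem_iterate_closedNbhd_of_walk {u v : V} (p : G.Walk u v) {W : Finset V} (hu : u ∈ W)
    {k : ℕ} (hk : p.length ≤ k) : v ∈ (closedNbhd G)^[k] W := by
  induction p generalizing W k with
  | nil => exact Function.id_le_iterate_of_id_le subset_closedNbhd k W hu
  | cons hadj p ih =>
    obtain ⟨k, rfl⟩ : ∃ j, k = j + 1 := Nat.exists_eq_add_one.2 (by simp at hk; omega)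
    rw [Function.iterate_succ_apply]
    exact ih (mem_closedNbhd_of_adj hu hadj) (by simpa using hk)

lemma netFlow_restrictCond {W : Finset V} {u : V} (hu : u ∈ W) (F : V → ℝ) :
    netFlow (restrictCond G c W) (closedNbhd G W) F u
      = ∑ z ∈ G.neighborFinset u, c u z * (F u - F z) := by
  rw [netFlow, ← sum_filter_of_ne (p := G.Adj u) fun z _ h => ?_]
  · refine sum_congr ?_ fun z hz => ?_
    · ext z
      simpa using fun h => mem_closedNbhd_of_adj hu h
    · simp_all [restrictCond]
  · by_contra hz
    simp [restrictCond, hz] at h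

lemma dirichletEnergy_le_ofReal_finEnergy (hcpos : ∀ u v, G.Adj u v → 0 < c u v)
    {W : Finset V} {F : V → ℝ} (hF : ∀ x ∉ W, F x = 0) :
    dirichletEnergy G c F
      ≤ ENNReal.ofReal (finEnergy (restrictCond G c W) (closedNbhd G W) F) := by
  rw [ofReal_finEnergy (restrictCond_nonneg hcpos W), dirichletEnergy,
    tsum_eq_sum (s := closedNbhd G W ×ˢ closedNbhd G W)]
  · gcongr with p
    unfold restrictCond
    split_ifs <;> simp_all
  · rintro ⟨x, y⟩ hp
    split_ifs with h
    · have hx : x ∉ W := fun hx => hp (mem_product.2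
        ⟨subset_closedNbhd W hx, mem_closedNbhd_of_adj hx h⟩)
      have hy : y ∉ W := fun hy => hp (mem_product.2
        ⟨mem_closedNbhd_of_adj hy h.symm, subset_closedNbhd W hy⟩)
      simp [hF x hx, hF y hy]
    · rfl

lemma effCondToInfinity_le_ofReal_finEnergy (hcpos : ∀ u v, G.Adj u v → 0 < c u v) {ρ : V}
    {W : Finset V} {F : V → ℝ} (hFρ : F ρ = 1) (hF : ∀ x ∉ W, F x = 0) :
    effCondToInfinity G c ρ
      ≤ ENNReal.ofReal (finEnergy (restrictCond G c W) (closedNbhd G W) F) :=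
  calc effCondToInfinity G c ρ ≤ freeEffCond G c {ρ} {x | x ∉ W} := iInf_le _ W
    _ ≤ dirichletEnergy G c F := iInf₂_le_of_le F (by simpa using hFρ) (iInf_le _ hF)
    _ ≤ _ := dirichletEnergy_le_ofReal_finEnergy hcpos hF

end Network

section Walk

variable {V : Type*} {G : SimpleGraph V} [∀ v, Fintype (G.neighborSet v)] {c : V → V → ℝ}

lemma walkStep_nonneg (hcpos : ∀ u v, G.Adj u v → 0 < c u v) (u v : V) :
    0 ≤ walkStep G c u v := by
  unfold walkStep
  split_ifs with h
  · exact div_nonneg (hcpos u v h).le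
      (sum_nonneg fun z hz => (hcpos u z ((G.mem_neighborFinset u z).1 hz)).le)
  · exact le_rfl

lemma sum_walkStep_mul (u : V) (X : V → ℝ) :
    ∑ z ∈ G.neighborFinset u, walkStep G c u z * X z
      = (∑ z ∈ G.neighborFinset u, c u z * X z) / ∑ z ∈ G.neighborFinset u, c u z := by
  rw [sum_div]
  refine sum_congr rfl fun z hz => ?_
  rw [walkStep, if_pos ((G.mem_neighborFinset u z).1 hz)]
  ring

lemma sum_walkStep_mul_le_of_harmonic {u : V} {X : V → ℝ}
    (hX : ∑ z ∈ G.neighborFinset u, c u z * (X u - X z) = 0) (hXu : 0 ≤ X u) :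
    ∑ z ∈ G.neighborFinset u, walkStep G c u z * X z ≤ X u := by
  have hmean : ∑ z ∈ G.neighborFinset u, c u z * X z
      = (∑ z ∈ G.neighborFinset u, c u z) * X u := by
    rw [eq_comm, ← sub_eq_zero, ← hX, sum_mul, ← sum_sub_distrib]
    exact sum_congr rfl fun z _ => by ring
  rw [sum_walkStep_mul, hmean]
  rcases eq_or_ne (∑ z ∈ G.neighborFinset u, c u z) 0 with h | h
  · simpa [h] using hXu
  · rw [mul_div_cancel_left₀ _ h]

lemma netHitBy_le (hcpos : ∀ u v, G.Adj u v → 0 < c u v) {A : Set V} {Ψ : V → ℝ}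
    (hΨ : ∀ x, 0 ≤ Ψ x) (hΨA : ∀ x ∈ A, 1 ≤ Ψ x) (k : ℕ) (u : V)
    (hsuper : ∀ v (p : G.Walk u v), p.length < k → v ∉ A →
      ∑ z ∈ G.neighborFinset v, walkStep G c v z * Ψ z ≤ Ψ v) :
    netHitBy G c A k u ≤ Ψ u := by
  induction k generalizing u with
  | zero =>
    rw [netHitBy]
    split_ifs with hu
    exacts [hΨA u hu, hΨ u]
  | succ k ih =>
    rw [netHitBy]
    split_ifs with hu
    · exact hΨA u hu
    refine le_trans (sum_le_sum fun z hz => ?_) (hsuper u .nil (Nat.succ_pos k) hu)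
    refine mul_le_mul_of_nonneg_left (ih z fun v p hp hv => ?_) (walkStep_nonneg hcpos u z)
    exact hsuper v (.cons ((G.mem_neighborFinset u z).1 hz) p) (by simpa using hp) hv

lemma netHitBy_le_energy_ratio (hcsymm : ∀ u v, c u v = c v u)
    (hcpos : ∀ u v, G.Adj u v → 0 < c u v) {ρ : V} {A : Set V} (hρA : ρ ∉ A) {n : ℕ}
    {W : Finset V} (hW : ∀ v (p : G.Walk ρ v), p.length ≤ n → v ∈ W)
    (hf : finEnergy (restrictCond G c W) (closedNbhd G W)
      (voltage (restrictCond G c W) (closedNbhd G W) ρ {x | x ∉ W}) ≠ 0) :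
    netHitBy G c A n ρ
      ≤ finEnergy (restrictCond G c W) (closedNbhd G W)
          (voltage (restrictCond G c W) (closedNbhd G W) ρ A)
        / finEnergy (restrictCond G c W) (closedNbhd G W)
          (voltage (restrictCond G c W) (closedNbhd G W) ρ {x | x ∉ W}) := by
  have ha := restrictCond_nonneg hcpos W
  have hρW : ρ ∈ W := hW ρ .nil n.zero_le
  rw [← hittingMajorant_apply_self]
  refine netHitBy_le hcpos (hittingMajorant_nonneg ha)
    (fun x hx => one_le_hittingMajorant ha hx (ne_of_mem_of_not_mem hx hρA)) n ρ
    fun v p hp hvA => sum_walkStep_mul_le_of_harmonic ?_ (hittingMajorant_nonneg ha v)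
  have hvW := hW v p hp.le
  rw [← netFlow_restrictCond hvW]
  exact netFlow_hittingMajorant (restrictCond_symm hcsymm W) ha (restrictCond_self W)
    (subset_closedNbhd W hρW) hf (subset_closedNbhd W hvW) hvA (by simpa using hvW)

end Walk

theorem hitting_prob_le_cond_ratio_general {V : Type*} (G : SimpleGraph V)
    [∀ v, Fintype (G.neighborSet v)]
    (c : V → V → ℝ) (hcsymm : ∀ u v, c u v = c v u)
    (hcpos : ∀ u v, G.Adj u v → 0 < c u v)
    (ρ : V) (htransient : 0 < effCondToInfinity G c ρ) (A : Set V) :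
    (⨆ n, ENNReal.ofReal (netHitBy G c A n ρ))
      ≤ freeEffCond G c {ρ} A / effCondToInfinity G c ρ := by
  refine iSup_le fun n => ?_
  set W := (closedNbhd G)^[n] {ρ}
  set a := restrictCond G c W
  set S := closedNbhd G W
  set f := voltage a S ρ {x | x ∉ W}
  have hW : ∀ v (p : G.Walk ρ v), p.length ≤ n → v ∈ W := fun v p hp =>
    mem_iterate_closedNbhd_of_walk p (mem_singleton_self ρ) hp
  have hρW : ρ ∈ W := hW ρ .nil n.zero_le
  have hκf : effCondToInfinity G c ρ ≤ ENNReal.ofReal (finEnergy a S f) :=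
    effCondToInfinity_le_ofReal_finEnergy hcpos voltage_apply_self fun x hx =>
      voltage_eq_zero hx (ne_of_mem_of_not_mem hρW hx).symm
  have hf : 0 < finEnergy a S f := ENNReal.ofReal_pos.1 (htransient.trans_le hκf)
  rw [ENNReal.le_div_iff_mul_le (.inl htransient.ne') (.inl (ne_top_of_le_ne_top
    ENNReal.ofReal_ne_top hκf))]
  refine le_iInf₂ fun g hgρ => le_iInf fun hgA => ?_
  have hρA : ρ ∉ A := fun h => by simpa [hgρ ρ rfl] using hgA ρ h
  have hP : netHitBy G c A n ρ * finEnergy a S f ≤ finEnergy a S (voltage a S ρ A) :=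
    (le_div_iff₀ hf).1 (netHitBy_le_energy_ratio hcsymm hcpos hρA hW hf.ne')
  calc ENNReal.ofReal (netHitBy G c A n ρ) * effCondToInfinity G c ρ
      ≤ ENNReal.ofReal (netHitBy G c A n ρ) * ENNReal.ofReal (finEnergy a S f) := by gcongr
    _ = ENNReal.ofReal (netHitBy G c A n ρ * finEnergy a S f) := (ENNReal.ofReal_mul' hf.le).symm
    _ ≤ ENNReal.ofReal (finEnergy a S g) := ENNReal.ofReal_le_ofReal
      (hP.trans (finEnergy_voltage_le (restrictCond_nonneg hcpos W) (hgρ ρ rfl) hgA))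
    _ ≤ dirichletEnergy G c g := ofReal_finEnergy_le_dirichletEnergy hcpos W S g

/-- For a transient network `G`, a vertex `ρ` and a vertex set `A`,
`P_ρ(hit A) ≤ C^F_eff(ρ ↔ A; G) / C_eff(ρ → ∞; G)`. -/
theorem hitting_prob_le_cond_ratio {V : Type*} (G : SimpleGraph V)
    [∀ v, Fintype (G.neighborSet v)] (hG : G.Connected)
    (c : V → V → ℝ) (hcsymm : ∀ u v, c u v = c v u)
    (hcpos : ∀ u v, G.Adj u v → 0 < c u v)
    (ρ : V) (htransient : 0 < effCondToInfinity G c ρ) (A : Set V) :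
    (⨆ n, ENNReal.ofReal (netHitBy G c A n ρ))
      ≤ freeEffCond G c {ρ} A / effCondToInfinity G c ρ :=
  hitting_prob_le_cond_ratio_general G c hcsymm hcpos ρ htransient A
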